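/- arXiv:math/0409570 — 2 statements merged into one kernel-verified Lean document; each statement's English description precedes it below -/
import Mathlib

section
/- Let A be a finite dimensional algebra over a field k, and let X be a right bounded complex of finitely generated projective A-modules whose differential satisfies im(∂^X) ⊆ rad(X) (a minimal complex). If φ: X → X is an endomorphism of complexes such that φ - id_X is null-homotopic, then φ is an isomorphism of complexes. -/
open CategoryTheory Limits

/-- The radical of a module over a finite dimensional algebra: `J(A) • M`. -/
def radSubmodule (A : Type) [Ring A] (M : ModuleCat A) : Submodule A M :=
  (Ideal.jacobson (⊥ : Ideal A)) • (⊤ : Submodule A M)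

open Ideal

/-- The Jacobson radical of a (possibly noncommutative) ring is closed under right
multiplication, i.e. it is a two-sided ideal. -/
lemma jac_mul_mem {R : Type*} [Ring R] {x : R} (hx : x ∈ jacobson (⊥ : Ideal R)) (r : R) :
    x * r ∈ jacobson (⊥ : Ideal R) := by
  rw [mem_jacobson_iff] at hx ⊢
  intro y
  obtain ⟨z, hz⟩ := hx (r * y)
  rw [Submodule.mem_bot, sub_eq_zero] at hz
  refine ⟨1 - y * x * z * r, ?_⟩
  rw [Submodule.mem_bot, sub_eq_zero]
  have : z * (r * y) * x + z = 1 := hz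
  calc (1 - y * x * z * r) * y * (x * r) + (1 - y * x * z * r)
      = 1 + y * x * r - y * x * (z * (r * y) * x + z) * r := by noncomm_ring
    _ = 1 := by rw [this]; noncomm_ring

/-- Nakayama's lemma for possibly noncommutative rings: a finitely generated submodule
equal to its product with the Jacobson radical is trivial. -/
lemma nak {R M : Type*} [Ring R] [AddCommGroup M] [Module R M] (s : Finset M)
    (h : Submodule.span R (s : Set M) ≤ jacobson (⊥ : Ideal R) • Submodule.span R (s : Set M)) :
    Submodule.span R (s : Set M) = ⊥ := by
  classical
  induction s using Finset.induction_on with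
  | empty => simp
  | @insert a t ha ih =>
    set J := jacobson (⊥ : Ideal R) with hJ
    rw [Finset.coe_insert] at h
    have hins : (Submodule.span R (insert a (t : Set M))) =
        Submodule.span R {a} ⊔ Submodule.span R (t : Set M) := by
      rw [Submodule.span_insert]
    have key : a ∈ Submodule.span R (t : Set M) := by
      have ha' : a ∈ J • Submodule.span R (insert a (t : Set M)) :=
        h (Submodule.subset_span (Set.mem_insert a _))
      rw [hins, Submodule.smul_sup] at ha'
      have hle : J • Submodule.span R {a} ≤ Submodule.map (LinearMap.toSpanSingleton R M a) J := by
        refine Submodule.smul_le.2 fun c hc n hn => ?_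
        obtain ⟨r, rfl⟩ := Submodule.mem_span_singleton.1 hn
        refine ⟨c * r, jac_mul_mem hc r, ?_⟩
        simp [LinearMap.toSpanSingleton_apply, mul_smul]
      have ha'' : a ∈ Submodule.map (LinearMap.toSpanSingleton R M a) J ⊔ Submodule.span R (t : Set M) :=
        Submodule.mem_sup.2 <| by
          obtain ⟨y, hy, z, hz, hyz⟩ := Submodule.mem_sup.1 ha'
          exact ⟨y, hle hy, z, Submodule.smul_le_right hz, hyz⟩
      obtain ⟨y, hy, z, hz, hyz⟩ := Submodule.mem_sup.1 ha''
      obtain ⟨c, hc, rfl⟩ := hy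
      obtain ⟨s', hs'⟩ := exists_mul_sub_mem_of_sub_one_mem_jacobson (1 - c)
        (by simpa using J.neg_mem hc)
      rw [Submodule.mem_bot, sub_eq_zero] at hs'
      have : a = s' • z := by
        have h1 : (1 - c) • a = z := by
          rw [sub_smul, one_smul]
          rw [LinearMap.toSpanSingleton_apply] at hyz
          exact sub_eq_of_eq_add' hyz.symm
        calc a = (1 : R) • a := (one_smul R a).symm
          _ = (s' * (1 - c)) • a := by rw [hs']
          _ = s' • ((1 - c) • a) := by rw [mul_smul]
          _ = s' • z := by rw [h1]
      rw [this]
      exact Submodule.smul_mem _ _ hz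
    have heq : Submodule.span R ((insert a t : Finset M) : Set M)
        = Submodule.span R (t : Set M) := by
      rw [Finset.coe_insert, Submodule.span_insert_eq_span key]
    rw [Submodule.span_insert_eq_span key] at h
    rw [heq]
    exact ih h

/-- Iterated powers of the Jacobson radical, as an iterated submodule product. -/
def jacIter (R : Type*) [Ring R] : ℕ → Ideal R
  | 0 => ⊤
  | n + 1 => jacobson (⊥ : Ideal R) • jacIter R n

lemma jacIter_succ_le (R : Type*) [Ring R] (n : ℕ) : jacIter R (n + 1) ≤ jacIter R n :=
  Submodule.smul_le_right

lemma jacIter_antitone (R : Type*) [Ring R] : Antitone (jacIter R) :=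
  antitone_nat_of_succ_le (jacIter_succ_le R)

/-- In a left artinian and left noetherian ring, some iterated power of the Jacobson radical
vanishes. -/
lemma jacIter_eq_bot (R : Type*) [Ring R] [IsArtinian R R] [IsNoetherian R R] :
    ∃ n, jacIter R n = ⊥ := by
  obtain ⟨n, hn⟩ := IsArtinian.monotone_stabilizes
    (⟨fun n => OrderDual.toDual (jacIter R n), fun a b hab => jacIter_antitone R hab⟩ :
      ℕ →o (Submodule R R)ᵒᵈ)
  refine ⟨n, ?_⟩
  have hstab : jacIter R n = jacobson (⊥ : Ideal R) • jacIter R n := hn (n+1) (Nat.le_succ n)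
  obtain ⟨s, hs⟩ := IsNoetherian.noetherian (jacIter R n)
  rw [← hs] at hstab
  rw [← hs]
  exact nak s hstab.le

lemma psi_nilpotent {R M : Type*} [Ring R] [AddCommGroup M] [Module R M]
    [IsArtinian R R] [IsNoetherian R R] (ψ : M →ₗ[R] M)
    (hψ : LinearMap.range ψ ≤ jacobson (⊥ : Ideal R) • (⊤ : Submodule R M)) :
    IsNilpotent ψ := by
  have claim : ∀ m : ℕ, LinearMap.range (ψ ^ m) ≤ jacIter R m • (⊤ : Submodule R M) := by
    intro m
    induction m with
    | zero => simp [jacIter]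
    | succ m ih =>
      have h1 : ψ ^ (m + 1) = (ψ ^ m) ∘ₗ ψ := by rw [pow_succ]; rfl
      rw [h1, LinearMap.range_comp]
      calc Submodule.map (ψ ^ m) (LinearMap.range ψ)
          ≤ Submodule.map (ψ ^ m) (jacobson (⊥ : Ideal R) • ⊤) := Submodule.map_mono hψ
        _ = jacobson (⊥ : Ideal R) • Submodule.map (ψ ^ m) ⊤ := Submodule.map_smul'' _ _ _
        _ ≤ jacobson (⊥ : Ideal R) • (jacIter R m • ⊤) := by
            rw [Submodule.map_top]; exact smul_mono_right _ ih
        _ = jacIter R (m + 1) • ⊤ := (Submodule.smul_assoc _ _ _).symm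
  obtain ⟨n, hn⟩ := jacIter_eq_bot R
  refine ⟨n, ?_⟩
  have := claim n
  rw [hn, Submodule.bot_smul, le_bot_iff, LinearMap.range_eq_bot] at this
  exact this

/-- if `X` is a right bounded complex of finitely generated projective modules
over a finite dimensional algebra whose differential has image in the radical (a minimal
complex) and `φ : X ⟶ X` is homotopic to the identity, then `φ` is an isomorphism of
complexes. -/
theorem stmt2 (k : Type) [Field k] (A : Type) [Ring A] [Algebra k A] [FiniteDimensional k A]
    (X : ChainComplex (ModuleCat A) ℤ)
    (hXbd : ∃ i₀ : ℤ, ∀ i < i₀, IsZero (X.X i))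
    (hXproj : ∀ i, Module.Projective A (X.X i)) (hXfin : ∀ i, Module.Finite A (X.X i))
    (hrad : ∀ i, LinearMap.range (X.d i (i - 1)).hom ≤ radSubmodule A (X.X (i - 1)))
    (φ : X ⟶ X) (h : Nonempty (Homotopy φ (𝟙 X))) :
    IsIso φ := by
  haveI : IsArtinian A A := isArtinian_of_tower k inferInstance
  haveI : IsNoetherian A A := isNoetherian_of_tower k inferInstance
  unfold radSubmodule at hrad
  obtain ⟨H⟩ := h
  have key : ∀ i : ℤ, IsIso (φ.f i) := by
    intro i
    have hcomm := H.comm i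
    rw [dNext_eq H.hom (show (ComplexShape.down ℤ).Rel i (i-1) by simp),
        prevD_eq H.hom (show (ComplexShape.down ℤ).Rel (i+1) i by simp)] at hcomm
    obtain ⟨ψ, hψdef⟩ : ∃ ψ : Module.End A ↑(X.X i),
        ⇑ψ = ⇑(X.d i (i-1) ≫ H.hom (i-1) i + H.hom i (i+1) ≫ X.d (i+1) i) := ⟨_, rfl⟩
    have hrange : LinearMap.range ψ ≤
        jacobson (⊥ : Ideal A) • (⊤ : Submodule A (X.X i)) := by
      rintro _ ⟨y, rfl⟩
      rw [congrFun hψdef y]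
      have mem1 : (X.d i (i-1) ≫ H.hom (i-1) i) y ∈
          jacobson (⊥ : Ideal A) • (⊤ : Submodule A (X.X i)) := by
        have hd : X.d i (i-1) y ∈ jacobson (⊥ : Ideal A) • (⊤ : Submodule A (X.X (i-1))) :=
          hrad i ⟨y, rfl⟩
        have he : (X.d i (i-1) ≫ H.hom (i-1) i) y = H.hom (i-1) i (X.d i (i-1) y) := rfl
        rw [he]
        refine Submodule.smul_induction_on hd ?_ ?_
        · intro r hr n _
          rw [map_smul]
          exact Submodule.smul_mem_smul hr Submodule.mem_top
        · intro a b hx hy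
          rw [map_add]
          exact Submodule.add_mem _ hx hy
      have mem2 : (H.hom i (i+1) ≫ X.d (i+1) i) y ∈
          jacobson (⊥ : Ideal A) • (⊤ : Submodule A (X.X i)) := by
        have h1 : i + 1 - 1 = i := by omega
        have h2 := hrad (i+1)
        rw [h1] at h2
        exact h2 ⟨H.hom i (i+1) y, rfl⟩
      exact Submodule.add_mem _ mem1 mem2
    have hψnil : IsNilpotent ψ := psi_nilpotent ψ hrange
    have hpt : ∀ x, φ.f i x = x + ψ x := by
      intro x
      rw [hcomm]
      show (X.d i (i-1) ≫ H.hom (i-1) i) x + (H.hom i (i+1) ≫ X.d (i+1) i) x + x = x + ψ x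
      have h2 : ψ x = (X.d i (i-1) ≫ H.hom (i-1) i) x + (H.hom i (i+1) ≫ X.d (i+1) i) x :=
        congrFun hψdef x
      rw [h2]
      abel
    obtain ⟨F, hF⟩ : ∃ F : Module.End A ↑(X.X i), ∀ x, F x = φ.f i x := ⟨(φ.f i).hom, fun _ => rfl⟩
    have hF1 : F = 1 + ψ := by
      apply LinearMap.ext; intro x
      rw [hF x, hpt x]; rfl
    have hbij : Function.Bijective F := (Module.End.isUnit_iff F).mp (hF1 ▸ hψnil.isUnit_one_add)
    have hcoe : ⇑F = ⇑(φ.f i) := funext hF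
    rw [hcoe] at hbij
    exact (ConcreteCategory.isIso_iff_bijective (φ.f i)).mpr hbij
  haveI : ∀ n, IsIso (φ.f n) := key
  exact HomologicalComplex.Hom.isIso_of_components φ
end

section
/- Let A be a finite dimensional algebra over a field k and let M and N be right bounded complexes of finitely generated projective A-modules. Then there exist complexes M' and N' of finitely generated projective A-modules such that M' is homotopy equivalent to M, N' is homotopy equivalent to N, and M'_i ≅ N'_i as A-modules in every degree i. -/
open CategoryTheory Limits

namespace Stmt4Aux

set_option maxHeartbeats 1000000

universe v

variable {A : Type} [Ring A]

section Construction

variable (P Q : ChainComplex (ModuleCat.{v} A) ℤ) (i₀ : ℤ)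

/-- The degree `n` component of the enlarged complex. -/
abbrev Carrier (n : ℤ) : Type v :=
  ↥(P.X n) × (∀ j : (Finset.Icc i₀ (n-1) : Finset ℤ), ↥(P.X j.1)) ×
    (∀ j : (Finset.Icc i₀ n : Finset ℤ), ↥(Q.X j.1))

def Xc (n : ℤ) : ModuleCat A := ModuleCat.of A (Carrier P Q i₀ n)

def Dlin (n : ℤ) : Carrier P Q i₀ (n+1) →ₗ[A] Carrier P Q i₀ n where
  toFun x :=
    (P.d (n+1) n x.1,
     fun j => if (n+1-j.1) % 2 = 0 then
        x.2.1 ⟨j.1, by have := Finset.mem_Icc.mp j.2; exact Finset.mem_Icc.mpr (by omega)⟩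
      else 0,
     fun j => if (n+1-j.1) % 2 = 0 then 0
      else x.2.2 ⟨j.1, by have := Finset.mem_Icc.mp j.2; exact Finset.mem_Icc.mpr (by omega)⟩)
  map_add' x y := by
    refine Prod.ext (map_add _ _ _) (Prod.ext ?_ ?_) <;> funext j <;>
        simp only [Prod.fst_add, Prod.snd_add, Pi.add_apply] <;>
        split_ifs <;> first | rfl | rw [add_zero]
  map_smul' a x := by
    refine Prod.ext (map_smul _ _ _) (Prod.ext ?_ ?_) <;> funext j <;>
        simp only [Prod.smul_fst, Prod.smul_snd, Pi.smul_apply, RingHom.id_apply] <;>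
        split_ifs <;> first | rfl | rw [smul_zero]

def Dmod (n : ℤ) : Xc P Q i₀ (n+1) ⟶ Xc P Q i₀ n := ModuleCat.ofHom (Dlin P Q i₀ n)

lemma Dmod_fst (n : ℤ) (x : Carrier P Q i₀ (n+1)) :
    (Dmod P Q i₀ n x).1 = P.d (n+1) n x.1 := rfl

lemma Dmod_ray₁ (n : ℤ) (x : Carrier P Q i₀ (n+1))
    (j : (Finset.Icc i₀ (n-1) : Finset ℤ)) :
    (Dmod P Q i₀ n x).2.1 j = if (n+1-j.1) % 2 = 0 then
        x.2.1 ⟨j.1, by have := Finset.mem_Icc.mp j.2; exact Finset.mem_Icc.mpr (by omega)⟩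
      else 0 := rfl

lemma Dmod_ray₂ (n : ℤ) (x : Carrier P Q i₀ (n+1))
    (j : (Finset.Icc i₀ n : Finset ℤ)) :
    (Dmod P Q i₀ n x).2.2 j = if (n+1-j.1) % 2 = 0 then 0
      else x.2.2 ⟨j.1, by have := Finset.mem_Icc.mp j.2; exact Finset.mem_Icc.mpr (by omega)⟩ :=
  rfl

lemma Dsq (n : ℤ) : Dmod P Q i₀ (n+1) ≫ Dmod P Q i₀ n = 0 := by
  ext x
  show Dmod P Q i₀ n (Dmod P Q i₀ (n+1) x) = (0 : Xc P Q i₀ (n+1+1) ⟶ Xc P Q i₀ n) x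
  refine Prod.ext ?_ (Prod.ext ?_ ?_)
  · erw [Dmod_fst, Dmod_fst]
    have := congrArg (fun f => ModuleCat.Hom.hom f x.1) (P.d_comp_d (n+1+1) (n+1) n)
    simp only [ModuleCat.hom_comp, LinearMap.comp_apply] at this
    erw [this]
    rfl
  · funext j
    erw [Dmod_ray₁]
    by_cases h : (n+1-j.1) % 2 = 0
    · erw [if_pos h, Dmod_ray₁, if_neg (show ¬(n+1+1-(j:ℤ)) % 2 = 0 by omega)]; rfl
    · rw [if_neg h]; rfl
  · funext j
    erw [Dmod_ray₂]
    by_cases h : (n+1-j.1) % 2 = 0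
    · rw [if_pos h]; rfl
    · erw [if_neg h, Dmod_ray₂, if_pos (show (n+1+1-(j:ℤ)) % 2 = 0 by omega)]; rfl


/-- The enlarged complex. -/
def Mprime : ChainComplex (ModuleCat A) ℤ :=
  ChainComplex.of (Xc P Q i₀) (Dmod P Q i₀) (Dsq P Q i₀)

def inclLin (n : ℤ) : ↥(P.X n) →ₗ[A] Carrier P Q i₀ n where
  toFun a := (a, 0, 0)
  map_add' a b := by refine Prod.ext rfl (Prod.ext ?_ ?_) <;> funext j <;> simp
  map_smul' a b := by refine Prod.ext rfl (Prod.ext ?_ ?_) <;> funext j <;> simp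

def projLin (n : ℤ) : Carrier P Q i₀ n →ₗ[A] ↥(P.X n) where
  toFun x := x.1
  map_add' x y := rfl
  map_smul' a x := rfl

def incl : P ⟶ Mprime P Q i₀ where
  f n := ModuleCat.ofHom (inclLin P Q i₀ n)
  comm' := by
    rintro i j (rfl : j + 1 = i)
    rw [show (Mprime P Q i₀).d (j+1) j = Dmod P Q i₀ j from ChainComplex.of_d _ _ j]
    ext a
    show Dmod P Q i₀ j (inclLin P Q i₀ (j+1) a) = inclLin P Q i₀ j (P.d (j+1) j a)
    refine Prod.ext rfl (Prod.ext ?_ ?_) <;> funext jj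
    · rw [Dmod_ray₁]; split_ifs <;> rfl
    · rw [Dmod_ray₂]; split_ifs <;> rfl

def proj : Mprime P Q i₀ ⟶ P where
  f n := ModuleCat.ofHom (projLin P Q i₀ n)
  comm' := by
    rintro i j (rfl : j + 1 = i)
    rw [show (Mprime P Q i₀).d (j+1) j = Dmod P Q i₀ j from ChainComplex.of_d _ _ j]
    ext x
    show projLin P Q i₀ j (Dmod P Q i₀ j x) = P.d (j+1) j (projLin P Q i₀ (j+1) x)
    rfl

lemma incl_proj : incl P Q i₀ ≫ proj P Q i₀ = 𝟙 P := by
  apply HomologicalComplex.hom_ext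
  intro n
  ext a
  rfl

/-- The homotopy component. -/
def Hdep (i j : ℤ) (hij : i + 1 = j) : Carrier P Q i₀ i →ₗ[A] Carrier P Q i₀ j where
  toFun x :=
    (0,
     fun jj => if h : (i - jj.1) % 2 = 0 then 0
      else -x.2.1 ⟨jj.1, by
        have := Finset.mem_Icc.mp jj.2; exact Finset.mem_Icc.mpr (by omega)⟩,
     fun jj => if h : (i - jj.1) % 2 = 0 then
        -x.2.2 ⟨jj.1, by
          have := Finset.mem_Icc.mp jj.2; exact Finset.mem_Icc.mpr (by omega)⟩
      else 0)
  map_add' x y := by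
    refine Prod.ext ?_ (Prod.ext ?_ ?_)
    · show (0 : ↥(P.X j)) = 0 + 0
      rw [add_zero]
    · funext jj
      simp only [Prod.fst_add, Prod.snd_add, Pi.add_apply]
      split_ifs <;> first | rw [add_zero] | rw [neg_add]
    · funext jj
      simp only [Prod.fst_add, Prod.snd_add, Pi.add_apply]
      split_ifs <;> first | rw [add_zero] | rw [neg_add]
  map_smul' a x := by
    refine Prod.ext ?_ (Prod.ext ?_ ?_)
    · show (0 : ↥(P.X j)) = a • (0 : ↥(P.X j))
      rw [smul_zero]
    · funext jj
      simp only [Prod.smul_fst, Prod.smul_snd, Pi.smul_apply, RingHom.id_apply]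
      split_ifs <;> first | rw [smul_zero] | rw [smul_neg]
    · funext jj
      simp only [Prod.smul_fst, Prod.smul_snd, Pi.smul_apply, RingHom.id_apply]
      split_ifs <;> first | rw [smul_zero] | rw [smul_neg]

lemma Hdep_fst (i j : ℤ) (hij : i + 1 = j) (x : Carrier P Q i₀ i) :
    (Hdep P Q i₀ i j hij x).1 = 0 := rfl

lemma Hdep_ray₁ (i j : ℤ) (hij : i + 1 = j) (x : Carrier P Q i₀ i)
    (jj : (Finset.Icc i₀ (j-1) : Finset ℤ)) :
    (Hdep P Q i₀ i j hij x).2.1 jj = if h : (i - jj.1) % 2 = 0 then 0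
      else -x.2.1 ⟨jj.1, by
        have := Finset.mem_Icc.mp jj.2; exact Finset.mem_Icc.mpr (by omega)⟩ := rfl

lemma Hdep_ray₂ (i j : ℤ) (hij : i + 1 = j) (x : Carrier P Q i₀ i)
    (jj : (Finset.Icc i₀ j : Finset ℤ)) :
    (Hdep P Q i₀ i j hij x).2.2 jj = if h : (i - jj.1) % 2 = 0 then
        -x.2.2 ⟨jj.1, by
          have := Finset.mem_Icc.mp jj.2; exact Finset.mem_Icc.mpr (by omega)⟩
      else 0 := rfl

def homotopyInvHom : Homotopy (proj P Q i₀ ≫ incl P Q i₀) (𝟙 (Mprime P Q i₀)) where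
  hom i j := if h : i + 1 = j then ModuleCat.ofHom (Hdep P Q i₀ i j h) else 0
  zero i j hn := by
    have h' : ¬(i + 1 = j) := fun h => hn h
    exact dif_neg h'
  comm i := by
    obtain ⟨n, rfl⟩ : ∃ n, i = n + 1 := ⟨i - 1, by omega⟩
    rw [dNext_eq _ (show (ComplexShape.down ℤ).Rel (n+1) n from rfl),
      prevD_eq _ (show (ComplexShape.down ℤ).Rel (n+1+1) (n+1) from rfl)]
    rw [show (Mprime P Q i₀).d (n+1) n = Dmod P Q i₀ n from ChainComplex.of_d _ _ n,
      show (Mprime P Q i₀).d (n+1+1) (n+1) = Dmod P Q i₀ (n+1) from ChainComplex.of_d _ _ (n+1)]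
    erw [dif_pos rfl, dif_pos rfl]
    ext x
    show inclLin P Q i₀ (n+1) (projLin P Q i₀ (n+1) x) =
      Hdep P Q i₀ n (n+1) rfl (Dmod P Q i₀ n x)
      + (show Carrier P Q i₀ (n+1) from
          Dmod P Q i₀ (n+1) (Hdep P Q i₀ (n+1) (n+1+1) rfl x))
      + (show Carrier P Q i₀ (n+1) from x)
    refine Prod.ext ?_ (Prod.ext ?_ ?_)
    · show x.1 = 0 + P.d (n+1+1) (n+1) 0 + x.1
      rw [map_zero, zero_add, zero_add]
    · funext jj
      show (0 : ↥(P.X jj.1)) = _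
      simp only [Prod.fst_add, Prod.snd_add, Pi.add_apply]
      erw [Prod.snd_add, Prod.snd_add, Prod.fst_add, Prod.fst_add, Pi.add_apply, Pi.add_apply]
      erw [Hdep_ray₁, Dmod_ray₁]
      dsimp only
      by_cases h : (n - jj.1) % 2 = 0
      · erw [dif_pos h, if_pos (show (n+1+1-(jj:ℤ)) % 2 = 0 by omega), Hdep_ray₁]
        try dsimp only
        rw [dif_neg (show ¬(n+1-(jj:ℤ)) % 2 = 0 by omega), zero_add]
        exact (neg_add_cancel _).symm
      · erw [dif_neg h, if_neg (show ¬(n+1+1-(jj:ℤ)) % 2 = 0 by omega), Dmod_ray₁]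
        try dsimp only
        rw [if_pos (show (n+1-(jj:ℤ)) % 2 = 0 by omega), add_zero]
        exact (neg_add_cancel _).symm
    · funext jj
      show (0 : ↥(Q.X jj.1)) = _
      simp only [Prod.fst_add, Prod.snd_add, Pi.add_apply]
      erw [Prod.snd_add, Prod.snd_add, Pi.add_apply, Pi.add_apply]
      erw [Hdep_ray₂, Dmod_ray₂]
      dsimp only
      by_cases h : (n - jj.1) % 2 = 0
      · erw [dif_pos h, if_pos (show (n+1+1-(jj:ℤ)) % 2 = 0 by omega), Dmod_ray₂]
        try dsimp only
        rw [if_neg (show ¬(n+1-(jj:ℤ)) % 2 = 0 by omega), add_zero]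
        exact (neg_add_cancel _).symm
      · erw [dif_neg h, if_neg (show ¬(n+1+1-(jj:ℤ)) % 2 = 0 by omega), Hdep_ray₂]
        try dsimp only
        rw [dif_pos (show (n+1-(jj:ℤ)) % 2 = 0 by omega), zero_add]
        exact (neg_add_cancel _).symm


/-- The homotopy equivalence between `P` and the enlarged complex. -/
def homotopyEquiv : HomotopyEquiv P (Mprime P Q i₀) where
  hom := incl P Q i₀
  inv := proj P Q i₀
  homotopyHomInvId := Homotopy.ofEq (incl_proj P Q i₀)
  homotopyInvHomId := homotopyInvHom P Q i₀

/-- Moving the top degree piece into the product. -/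
def topEquivLin (F : ℤ → ModuleCat A) (a n : ℤ) (ha : a ≤ n) :
    (↥(F n) × ∀ j : (Finset.Icc a (n-1) : Finset ℤ), ↥(F j.1)) ≃ₗ[A]
      (∀ j : (Finset.Icc a n : Finset ℤ), ↥(F j.1)) where
  toFun x j := if hj : j.1 = n then cast (by rw [hj]) x.1
    else x.2 ⟨j.1, by have := Finset.mem_Icc.mp j.2; exact Finset.mem_Icc.mpr (by omega)⟩
  map_add' x y := by
    funext j
    simp only [Pi.add_apply]
    rcases j with ⟨jv, hjv⟩
    dsimp only
    by_cases hj : jv = n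
    · subst hj
      rw [dif_pos rfl, dif_pos rfl, dif_pos rfl]
      rfl
    · rw [dif_neg hj, dif_neg hj, dif_neg hj]
      rfl
  map_smul' a x := by
    funext j
    simp only [Pi.smul_apply, RingHom.id_apply]
    rcases j with ⟨jv, hjv⟩
    dsimp only
    by_cases hj : jv = n
    · subst hj
      rw [dif_pos rfl, dif_pos rfl]
      rfl
    · rw [dif_neg hj, dif_neg hj]
      rfl
  invFun y := (y ⟨n, Finset.mem_Icc.mpr ⟨ha, le_refl n⟩⟩,
    fun j => y ⟨j.1, by have := Finset.mem_Icc.mp j.2; exact Finset.mem_Icc.mpr (by omega)⟩)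
  left_inv x := by
    refine Prod.ext ?_ ?_
    · exact dif_pos rfl
    · funext j
      exact dif_neg (fun he => by
        have h2 : (j : ℤ) = n := he
        have := Finset.mem_Icc.mp j.2
        omega)
  right_inv y := by
    funext j
    rcases j with ⟨jv, hjv⟩
    show (if h : jv = n then _ else _) = _
    by_cases hj : jv = n
    · subst hj
      exact dif_pos rfl
    · exact dif_neg hj


/-- Swapping the roles of `P` and `Q` in the carrier, degreewise. -/
def carrierEquiv (n : ℤ) (h : i₀ ≤ n) : Carrier P Q i₀ n ≃ₗ[A] Carrier Q P i₀ n :=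
  (LinearEquiv.prodAssoc A _ _ _).symm.trans
    (((topEquivLin P.X i₀ n h).prodCongr
        (LinearEquiv.refl A (∀ j : (Finset.Icc i₀ n : Finset ℤ), ↥(Q.X j.1)))).trans
      ((LinearEquiv.prodComm A _ _).trans
        (((topEquivLin Q.X i₀ n h).symm.prodCongr
            (LinearEquiv.refl A (∀ j : (Finset.Icc i₀ n : Finset ℤ), ↥(P.X j.1)))).trans
          (LinearEquiv.prodAssoc A _ _ _))))

end Construction

lemma projective_pi {ι : Type} [Fintype ι] (F : ι → ModuleCat.{v} A)
    (h : ∀ i, Module.Projective A (F i)) : Module.Projective A (∀ i, ↥(F i)) := by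
  classical
  haveI := h
  haveI : Module.Projective A (Π₀ i, ↥(F i)) := inferInstance
  exact Module.Projective.of_equiv
    (show (Π₀ i, ↥(F i)) ≃ₗ[A] ∀ i, ↥(F i) from
      DirectSum.linearEquivFunOnFintype A ι fun i => ↥(F i))

lemma subsingleton_of_isZero {X : ModuleCat.{v} A} (h : IsZero X) : Subsingleton X := by
  refine ⟨fun a b => ?_⟩
  have h1 : (𝟙 X : X ⟶ X) = 0 := h.eq_of_src _ _
  calc a = (𝟙 X : X ⟶ X) a := rfl
    _ = (0 : X ⟶ X) a := by rw [h1]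
    _ = (0 : X ⟶ X) b := rfl
    _ = (𝟙 X : X ⟶ X) b := by rw [h1]
    _ = b := rfl

section Instances

variable (P Q : ChainComplex (ModuleCat.{v} A) ℤ) (i₀ : ℤ)

lemma mprime_projective (hP : ∀ i, Module.Projective A (P.X i))
    (hQ : ∀ i, Module.Projective A (Q.X i)) (n : ℤ) :
    Module.Projective A ((Mprime P Q i₀).X n) := by
  haveI h1 : Module.Projective A ↥(P.X n) := hP n
  haveI h2 : Module.Projective A (∀ j : (Finset.Icc i₀ (n-1) : Finset ℤ), ↥(P.X j.1)) :=
    projective_pi _ (fun j => hP j.1)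
  haveI h3 : Module.Projective A (∀ j : (Finset.Icc i₀ n : Finset ℤ), ↥(Q.X j.1)) :=
    projective_pi _ (fun j => hQ j.1)
  exact (inferInstance : Module.Projective A (Carrier P Q i₀ n))

lemma mprime_finite (hP : ∀ i, Module.Finite A (P.X i))
    (hQ : ∀ i, Module.Finite A (Q.X i)) (n : ℤ) :
    Module.Finite A ((Mprime P Q i₀).X n) := by
  haveI h1 : Module.Finite A ↥(P.X n) := hP n
  haveI h2 : ∀ j : (Finset.Icc i₀ (n-1) : Finset ℤ), Module.Finite A ↥(P.X j.1) :=
    fun j => hP j.1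
  haveI h3 : ∀ j : (Finset.Icc i₀ n : Finset ℤ), Module.Finite A ↥(Q.X j.1) :=
    fun j => hQ j.1
  exact (inferInstance : Module.Finite A (Carrier P Q i₀ n))

end Instances
end Stmt4Aux

open Stmt4Aux

/-- for any two right bounded complexes `M`, `N` of finitely generated
projective modules over a finite dimensional algebra there are homotopy equivalent
complexes `M' ≃ M` and `N' ≃ N` of finitely generated projective modules with
isomorphic components in every degree. -/
theorem stmt4 (k : Type) [Field k] (A : Type) [Ring A] [Algebra k A] [FiniteDimensional k A]
    (M N : ChainComplex (ModuleCat A) ℤ)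
    (hMbd : ∃ i₀ : ℤ, ∀ i < i₀, IsZero (M.X i))
    (hNbd : ∃ i₀ : ℤ, ∀ i < i₀, IsZero (N.X i))
    (hMproj : ∀ i, Module.Projective A (M.X i)) (hMfin : ∀ i, Module.Finite A (M.X i))
    (hNproj : ∀ i, Module.Projective A (N.X i)) (hNfin : ∀ i, Module.Finite A (N.X i)) :
    ∃ (M' N' : ChainComplex (ModuleCat A) ℤ),
      (∀ i, Module.Projective A (M'.X i)) ∧ (∀ i, Module.Finite A (M'.X i)) ∧
      (∀ i, Module.Projective A (N'.X i)) ∧ (∀ i, Module.Finite A (N'.X i)) ∧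
      Nonempty (HomotopyEquiv M M') ∧ Nonempty (HomotopyEquiv N N') ∧
      ∀ i, Nonempty (M'.X i ≅ N'.X i) := by
  obtain ⟨iM, hiM⟩ := hMbd
  obtain ⟨iN, hiN⟩ := hNbd
  set i₀ := min iM iN with hi₀
  refine ⟨Mprime M N i₀, Mprime N M i₀,
    mprime_projective M N i₀ hMproj hNproj,
    mprime_finite M N i₀ hMfin hNfin,
    mprime_projective N M i₀ hNproj hMproj,
    mprime_finite N M i₀ hNfin hMfin,
    ⟨homotopyEquiv M N i₀⟩, ⟨homotopyEquiv N M i₀⟩, ?_⟩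
  intro n
  by_cases h : i₀ ≤ n
  · exact ⟨LinearEquiv.toModuleIso (carrierEquiv M N i₀ n h)⟩
  · -- both sides are zero
    haveI : IsEmpty ((Finset.Icc i₀ (n-1) : Finset ℤ) : Type) := by
      rw [Finset.isEmpty_coe_sort, Finset.Icc_eq_empty]
      omega
    haveI : IsEmpty ((Finset.Icc i₀ n : Finset ℤ) : Type) := by
      rw [Finset.isEmpty_coe_sort, Finset.Icc_eq_empty]
      omega
    haveI hM0 : Subsingleton ↥(M.X n) := subsingleton_of_isZero (hiM n (by omega))
    haveI hN0 : Subsingleton ↥(N.X n) := subsingleton_of_isZero (hiN n (by omega))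
    have z1 : IsZero ((Mprime M N i₀).X n) := by
      haveI : Subsingleton ↑((Mprime M N i₀).X n) :=
        (inferInstance : Subsingleton (Carrier M N i₀ n))
      apply ModuleCat.isZero_of_subsingleton
    have z2 : IsZero ((Mprime N M i₀).X n) := by
      haveI : Subsingleton ↑((Mprime N M i₀).X n) :=
        (inferInstance : Subsingleton (Carrier N M i₀ n))
      apply ModuleCat.isZero_of_subsingleton
    exact ⟨z1.iso z2⟩
end
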